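/- arXiv:1310.8391 — 2 statements merged into one kernel-verified Lean document; each statement's English description precedes it below -/
import Mathlib

section
/- Let p > 1 and 0 < c̃² ≤ (√p - 1)². Set D = (p-1)²/c̃² - (p+1) and let q = 1 + (D - √(D² - 4p))/2 be the smallest root of the quadratic (q-1)² - D(q-1) + p = 0. Then ((q-1)/q)(p-1) ≤ 4p(p-1)c̃²/((p-1)² - c̃²(p+1)) ≤ 2√p(√p+1)c̃²/(√p - 1). -/
theorem exponent_factor_bound (p c2 : ℝ) (hp : 1 < p) (hc0 : 0 < c2)
    (hc : c2 ≤ (Real.sqrt p - 1) ^ 2) :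
    let D := (p - 1) ^ 2 / c2 - (p + 1)
    let q := 1 + (D - Real.sqrt (D ^ 2 - 4 * p)) / 2
    ((q - 1) / q) * (p - 1) ≤ 4 * p * (p - 1) * c2 / ((p - 1) ^ 2 - c2 * (p + 1)) ∧
    4 * p * (p - 1) * c2 / ((p - 1) ^ 2 - c2 * (p + 1)) ≤
      2 * Real.sqrt p * (Real.sqrt p + 1) * c2 / (Real.sqrt p - 1) := by
  intro D q
  have hDdef : D = (p - 1) ^ 2 / c2 - (p + 1) := rfl
  have hqdef : q = 1 + (D - Real.sqrt (D ^ 2 - 4 * p)) / 2 := rfl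
  set s := Real.sqrt p with hsdef
  have hs0 : 0 ≤ s := Real.sqrt_nonneg p
  have hsp : s ^ 2 = p := Real.sq_sqrt (by linarith)
  have hs1 : 1 < s := by nlinarith
  set r := Real.sqrt (D ^ 2 - 4 * p) with hrdef
  have hr0 : 0 ≤ r := Real.sqrt_nonneg _
  have hdenom : (p - 1) ^ 2 - c2 * (p + 1) = c2 * D := by
    rw [hDdef]; field_simp
  have hD2s : 2 * s ≤ D := by
    have h1 : (s + 1) ^ 2 * c2 ≤ (p - 1) ^ 2 := by nlinarith
    have h2 : (s + 1) ^ 2 ≤ (p - 1) ^ 2 / c2 := (le_div_iff₀ hc0).mpr h1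
    rw [hDdef]; nlinarith
  have hD4p : 0 ≤ D ^ 2 - 4 * p := by nlinarith
  have hr2 : r ^ 2 = D ^ 2 - 4 * p := Real.sq_sqrt hD4p
  clear_value q r D s
  clear hsdef hrdef
  subst hsp
  have hDpos : 0 < D := by nlinarith
  have hrD : r ≤ D := by nlinarith
  have hq1 : 1 ≤ q := by rw [hqdef]; linarith
  have hq0 : 0 < q := by linarith
  have hqm : 0 ≤ q - 1 := by linarith
  have hdpos : 0 < (s ^ 2 - 1) ^ 2 - c2 * (s ^ 2 + 1) := by
    rw [hdenom]; positivity
  constructor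
  · have hrhs : 4 * s ^ 2 * (s ^ 2 - 1) * c2 / ((s ^ 2 - 1) ^ 2 - c2 * (s ^ 2 + 1))
        = 4 * s ^ 2 / D * (s ^ 2 - 1) := by
      rw [hdenom]; field_simp
    rw [hrhs]
    have h1 : (q - 1) / q ≤ q - 1 := div_le_self hqm hq1
    have h2 : q - 1 ≤ 4 * s ^ 2 / D := by
      rw [le_div_iff₀ hDpos, hqdef]
      nlinarith [mul_nonneg (sub_nonneg.mpr hrD) hr0]
    have hp1 : 0 ≤ s ^ 2 - 1 := by nlinarith
    calc (q - 1) / q * (s ^ 2 - 1) ≤ (q - 1) * (s ^ 2 - 1) :=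
          mul_le_mul_of_nonneg_right h1 hp1
      _ ≤ 4 * s ^ 2 / D * (s ^ 2 - 1) := mul_le_mul_of_nonneg_right h2 hp1
  · rw [div_le_div_iff₀ hdpos (by linarith : (0:ℝ) < s - 1)]
    have hden : 2 * s * (s - 1) ^ 2 ≤ (s ^ 2 - 1) ^ 2 - c2 * (s ^ 2 + 1) := by nlinarith
    have h3 : (0:ℝ) ≤ 2 * s * (s + 1) * c2 := by positivity
    nlinarith [mul_le_mul_of_nonneg_left hden h3]
end

section
/- Let P be a Markov operator on bounded measurable functions (i.e., P is linear, positivity-preserving, and P1 = 1), and let p > 1. Suppose for some states z̃, z and constant Γ ≥ 1 the Harnack inequality (P f(z̃))^p ≤ Γ · P f^p(z) holds for all bounded nonnegative measurable f, and suppose the transition kernels P(z̃,·), P(z,·) exist. Then P(z̃,·) is absolutely continuous with respect to P(z,·), and the density π = dP(z̃,·)/dP(z,·) satisfies ∫ π^{1/(p-1)} dP(z̃,·) = ∫ π^{p/(p-1)} dP(z,·) ≤ Γ^{1/(p-1)}. -/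
/-!
With `μ = P(z̃, ·)`, `ν = P(z, ·)`, `π = dμ/dν` and `q = 1/(p-1)`: testing the Harnack inequality
against indicators shows that `ν`-null sets are `μ`-null. Testing it against the bounded function
`(π ∧ n)^q` gives, for `A_n = ∫ (π ∧ n)^(q+1) dν ≤ ∫ π (π ∧ n)^q dν = ∫ (π ∧ n)^q dμ = B_n`,
the inequality `B_n^p ≤ Γ A_n ≤ Γ B_n`, so `A_n ≤ B_n ≤ Γ^q`, and monotone convergence in `n`
bounds `∫ π^(q+1) dν`. The two moments agree because `∫ f dμ = ∫ π f dν`.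
-/

open MeasureTheory Filter Topology

def HarnackInequality {S : Type*} [MeasurableSpace S] (μ ν : Measure S) (p Γ : ℝ) : Prop :=
  ∀ f : S → ℝ, Measurable f → (∀ x, 0 ≤ f x) → (∃ C, ∀ x, f x ≤ C) →
    (∫ x, f x ∂μ) ^ p ≤ Γ * ∫ x, (f x) ^ p ∂ν

theorem Real.le_rpow_one_div_sub_one_of_rpow_le_mul {a Γ p : ℝ} (ha : 0 ≤ a) (hΓ : 0 ≤ Γ)
    (hp : 1 < p) (h : a ^ p ≤ Γ * a) : a ≤ Γ ^ (1 / (p - 1)) := by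
  rcases ha.eq_or_lt with rfl | ha
  · positivity
  rw [one_div, Real.le_rpow_inv_iff_of_pos ha.le hΓ (by linarith)]
  refine le_of_mul_le_mul_right ?_ ha
  rwa [← Real.rpow_add_one ha.ne', sub_add_cancel]

theorem one_div_sub_one_add_one {p : ℝ} (hp : p ≠ 1) : 1 / (p - 1) + 1 = p / (p - 1) := by
  field_simp [sub_ne_zero.mpr hp]
  ring

theorem MeasureTheory.integral_le_of_monotone_of_tendsto {α : Type*} [MeasurableSpace α]
    {μ : Measure α} {f : ℕ → α → ℝ} {F : α → ℝ} {C : ℝ}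
    (hf : ∀ n, Integrable (f n) μ) (hf_nonneg : ∀ n, 0 ≤ᵐ[μ] f n)
    (h_mono : ∀ᵐ x ∂μ, Monotone fun n ↦ f n x)
    (h_tendsto : ∀ᵐ x ∂μ, Tendsto (fun n ↦ f n x) atTop (𝓝 (F x)))
    (hC : ∀ n, ∫ x, f n x ∂μ ≤ C) : ∫ x, F x ∂μ ≤ C := by
  have hF_nonneg : 0 ≤ᵐ[μ] F := by
    filter_upwards [h_tendsto, hf_nonneg 0, h_mono] with x hx h0 hmono
    exact ge_of_tendsto' hx fun n ↦ h0.trans (hmono n.zero_le)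
  have hC_nonneg : 0 ≤ C := (integral_nonneg_of_ae (hf_nonneg 0)).trans (hC 0)
  have h_lim := lintegral_tendsto_of_tendsto_of_monotone
    (fun n ↦ (hf n).1.aemeasurable.ennreal_ofReal)
    (h_mono.mono fun x hx _ _ hmn ↦ ENNReal.ofReal_le_ofReal (hx hmn))
    (h_tendsto.mono fun x hx ↦ (ENNReal.continuous_ofReal.tendsto _).comp hx)
  rw [integral_eq_lintegral_of_nonneg_ae hF_nonneg
    (aestronglyMeasurable_of_tendsto_ae atTop (fun n ↦ (hf n).1) h_tendsto)]
  refine ENNReal.toReal_le_of_le_ofReal hC_nonneg (le_of_tendsto' h_lim fun n ↦ ?_)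
  rw [← ofReal_integral_eq_lintegral_ofReal (hf n) (hf_nonneg n)]
  exact ENNReal.ofReal_le_ofReal (hC n)

section RnDeriv

variable {S : Type*} [MeasurableSpace S] {μ ν : Measure S}

theorem integral_toReal_rnDeriv_rpow_eq [μ.HaveLebesgueDecomposition ν] [SigmaFinite μ]
    (hμν : μ ≪ ν) {q : ℝ} (hq : q + 1 ≠ 0) :
    ∫ x, (μ.rnDeriv ν x).toReal ^ q ∂μ = ∫ x, (μ.rnDeriv ν x).toReal ^ (q + 1) ∂ν := by
  rw [← integral_rnDeriv_smul hμν]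
  congr with x
  rw [smul_eq_mul, Real.rpow_add' ENNReal.toReal_nonneg hq, Real.rpow_one, mul_comm]

theorem integral_min_toReal_rnDeriv_rpow_add_one_le [IsFiniteMeasure μ]
    [μ.HaveLebesgueDecomposition ν] (hμν : μ ≪ ν) {q : ℝ} (hq : 0 ≤ q) (n : ℕ) :
    ∫ x, min (μ.rnDeriv ν x).toReal n ^ (q + 1) ∂ν ≤ ∫ x, min (μ.rnDeriv ν x).toReal n ^ q ∂μ := by
  rw [← integral_rnDeriv_smul hμν]
  refine integral_mono_of_nonneg (ae_of_all _ fun x ↦ by positivity) ?_ (ae_of_all _ fun x ↦ ?_)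
  · refine Measure.integrable_toReal_rnDeriv.mul_bdd (c := (n : ℝ) ^ q)
      (Measurable.aestronglyMeasurable (by fun_prop)) (ae_of_all _ fun x ↦ ?_)
    rw [Real.norm_of_nonneg (by positivity)]
    exact Real.rpow_le_rpow (by positivity) (min_le_right _ _) hq
  · have ht : 0 ≤ min (μ.rnDeriv ν x).toReal n := by positivity
    simp only [smul_eq_mul]
    rw [Real.rpow_add' ht (by linarith), Real.rpow_one, mul_comm]
    exact mul_le_mul_of_nonneg_right (min_le_left _ _) (by positivity)

theorem integrable_min_toReal_rnDeriv_rpow [IsFiniteMeasure ν] {r : ℝ} (hr : 0 ≤ r) (n : ℕ) :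
    Integrable (fun x ↦ min (μ.rnDeriv ν x).toReal n ^ r) ν := by
  refine .of_bound (Measurable.aestronglyMeasurable (by fun_prop)) ((n : ℝ) ^ r)
    (ae_of_all _ fun x ↦ ?_)
  rw [Real.norm_of_nonneg (by positivity)]
  exact Real.rpow_le_rpow (by positivity) (min_le_right _ _) hr

end RnDeriv

theorem tendsto_min_natCast_atTop (a : ℝ) : Tendsto (fun n : ℕ ↦ min a n) atTop (𝓝 a) :=
  tendsto_nhds_of_eventually_eq <| (eventually_ge_atTop ⌈a⌉₊).mono fun _ hn ↦
    min_eq_left ((Nat.le_ceil a).trans (Nat.cast_le.mpr hn))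

namespace HarnackInequality

variable {S : Type*} [MeasurableSpace S] {μ ν : Measure S} {p Γ : ℝ}

theorem absolutelyContinuous [IsFiniteMeasure μ] (h : HarnackInequality μ ν p Γ) (hp : 0 < p) :
    μ ≪ ν := by
  refine Measure.AbsolutelyContinuous.mk fun A hA hνA ↦ ?_
  have h_indicator_rpow : ∀ x, A.indicator (1 : S → ℝ) x ^ p = A.indicator 1 x := fun x ↦ by
    by_cases hx : x ∈ A <;> simp [hx, Real.zero_rpow hp.ne']
  have h_test := h (A.indicator 1) (measurable_one.indicator hA)
    (Set.indicator_nonneg fun _ _ ↦ zero_le_one) ⟨1, Set.indicator_le_self' fun _ _ ↦ zero_le_one⟩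
  simp only [h_indicator_rpow, integral_indicator_one hA, measureReal_def, hνA,
    ENNReal.toReal_zero, mul_zero] at h_test
  have h_zero := le_antisymm h_test (by positivity)
  rw [Real.rpow_eq_zero ENNReal.toReal_nonneg hp.ne', ENNReal.toReal_eq_zero_iff] at h_zero
  exact h_zero.resolve_right (measure_ne_top μ A)

theorem integral_min_toReal_rnDeriv_rpow_le [IsFiniteMeasure μ] [μ.HaveLebesgueDecomposition ν]
    (h : HarnackInequality μ ν p Γ) (hp : 1 < p) (hΓ : 0 ≤ Γ) (n : ℕ) :
    ∫ x, min (μ.rnDeriv ν x).toReal n ^ (p / (p - 1)) ∂ν ≤ Γ ^ (1 / (p - 1)) := by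
  have hq : 0 < 1 / (p - 1) := one_div_pos.mpr (sub_pos.mpr hp)
  set t : S → ℝ := fun x ↦ min (μ.rnDeriv ν x).toReal n
  have ht : ∀ x, 0 ≤ t x := fun x ↦ by positivity
  have h_le : ∫ x, t x ^ (p / (p - 1)) ∂ν ≤ ∫ x, t x ^ (1 / (p - 1)) ∂μ := by
    rw [← one_div_sub_one_add_one hp.ne']
    exact integral_min_toReal_rnDeriv_rpow_add_one_le (h.absolutelyContinuous (by linarith)) hq.le n
  have h_harnack := h (fun x ↦ t x ^ (1 / (p - 1))) (by fun_prop) (fun x ↦ by positivity)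
    ⟨(n : ℝ) ^ (1 / (p - 1)), fun x ↦ Real.rpow_le_rpow (ht x) (min_le_right _ _) hq.le⟩
  simp only [← Real.rpow_mul (ht _), one_div_mul_eq_div] at h_harnack
  exact h_le.trans <| Real.le_rpow_one_div_sub_one_of_rpow_le_mul
    (integral_nonneg fun x ↦ by positivity) hΓ hp (h_harnack.trans (by gcongr))

end HarnackInequality

theorem harnack_implies_density_bound {S : Type*} [MeasurableSpace S]
    (μ ν : Measure S) [IsProbabilityMeasure μ] [IsProbabilityMeasure ν]
    (p Γ : ℝ) (hp : 1 < p) (hΓ : 1 ≤ Γ)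
    (harnack : ∀ f : S → ℝ, Measurable f → (∀ x, 0 ≤ f x) → (∃ C, ∀ x, f x ≤ C) →
      (∫ x, f x ∂μ) ^ p ≤ Γ * ∫ x, (f x) ^ p ∂ν) :
    μ ≪ ν ∧
    (∫ x, ((μ.rnDeriv ν x).toReal) ^ (1 / (p - 1)) ∂μ) =
      ∫ x, ((μ.rnDeriv ν x).toReal) ^ (p / (p - 1)) ∂ν ∧
    (∫ x, ((μ.rnDeriv ν x).toReal) ^ (p / (p - 1)) ∂ν) ≤ Γ ^ (1 / (p - 1)) := by
  have h : HarnackInequality μ ν p Γ := harnack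
  have hμν := h.absolutelyContinuous (by linarith)
  have hq : 0 < 1 / (p - 1) := one_div_pos.mpr (sub_pos.mpr hp)
  have hr : 0 ≤ p / (p - 1) := one_div_sub_one_add_one hp.ne' ▸ by positivity
  refine ⟨hμν, ?_, ?_⟩
  · rw [integral_toReal_rnDeriv_rpow_eq hμν (by positivity), one_div_sub_one_add_one hp.ne']
  · refine integral_le_of_monotone_of_tendsto (integrable_min_toReal_rnDeriv_rpow hr)
      (fun n ↦ ae_of_all _ fun x ↦ by positivity) (ae_of_all _ fun x m n hmn ↦ ?_)
      (ae_of_all _ fun x ↦ ?_) (h.integral_min_toReal_rnDeriv_rpow_le hp (by linarith))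
    · exact Real.rpow_le_rpow (by positivity) (min_le_min le_rfl (by exact_mod_cast hmn)) hr
    · exact (tendsto_min_natCast_atTop _).rpow_const (.inr hr)
end
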